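/- For every odd positive integer m, ζ(2m+1) + 2 Σ_{n=1}^∞ n^{-2m-1}/(e^{2πn} - 1) = π^{2m+1} 2^{2m} Σ_{j=0}^{m+1} (-1)^{j+1} B_{2j} B_{2m+2-2j} / ((2j)! (2m+2-2j)!). -/

import Mathlib

/-!
Feeding `a = n` into the partial-fraction expansion `π coth (π a) = 1 / a + ∑ 2a / (a² + k²)`
(Mittag-Leffler for `cot` at `z = i a`) and summing against `n ^ (-2m-1)` gives
`π ∑ n ^ (-2m-1) coth (π n) = ζ(2m+2) + 2 D`, where `D = ∑_{n,k ≥ 1} 1 / (n ^ 2m (n² + k²))`.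
Expanding `1 / (x ^ m (x + y))` in partial fractions in `x = n²`, `y = k²` and swapping `n`
and `k` in the remainder gives `D = ∑_{j < m} (-1) ^ j ζ(2m-2j) ζ(2j+2) + (-1) ^ m D`, which
determines `D` for odd `m`. Euler's evaluation of `ζ(2k)` turns the result into Bernoulli
numbers, and `coth (π n) = 1 + 2 / (e ^ (2πn) - 1)` splits the left-hand side into `ζ(2m+1)`
and Lerch's series.
-/

open Complex Real

noncomputable def zetaNat (k : ℕ) : ℝ := ∑' n : ℕ, 1 / ((n : ℝ) + 1) ^ k

lemma summable_one_div_nat_add_one_pow {k : ℕ} (hk : 1 < k) :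
    Summable (fun n : ℕ => 1 / ((n : ℝ) + 1) ^ k) := by
  exact_mod_cast (summable_nat_add_iff 1).mpr (Real.summable_one_div_nat_pow.mpr hk)

lemma hasSum_zetaNat {k : ℕ} (hk : 1 < k) :
    HasSum (fun n : ℕ => 1 / ((n : ℝ) + 1) ^ k) (zetaNat k) :=
  (summable_one_div_nat_add_one_pow hk).hasSum

lemma ofReal_zetaNat {k : ℕ} (hk : 1 < k) : (zetaNat k : ℂ) = riemannZeta k := by
  rw [zetaNat, Complex.ofReal_tsum, zeta_eq_tsum_one_div_nat_add_one_cpow (by simpa using hk)]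
  push_cast
  simp [Complex.cpow_natCast]

lemma hasSum_zetaNat_mul_zetaNat {k l : ℕ} (hk : 1 < k) (hl : 1 < l) :
    HasSum (fun p : ℕ × ℕ => 1 / ((p.1 : ℝ) + 1) ^ k * (1 / ((p.2 : ℝ) + 1) ^ l))
      (zetaNat k * zetaNat l) :=
  (hasSum_zetaNat hk).mul (hasSum_zetaNat hl) <|
    (summable_one_div_nat_add_one_pow hk).mul_of_nonneg (summable_one_div_nat_add_one_pow hl)
      (fun _ => by positivity) (fun _ => by positivity)

/-- `coth (π a)`, in the form in which it appears in Lerch's series. -/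
noncomputable def cothPi (a : ℝ) : ℝ := 1 + 2 / (Real.exp (2 * π * a) - 1)

lemma I_mul_ofReal_mem_integerComplement {a : ℝ} (ha : a ≠ 0) :
    I * a ∈ integerComplement := by
  rintro ⟨n, hn⟩
  have := congrArg Complex.im hn
  simp only [intCast_im, mul_im, I_re, ofReal_im, mul_zero, I_im, ofReal_re, one_mul,
    zero_add] at this
  exact ha this.symm

lemma hasSum_two_mul_div_sq_add_sq {a : ℝ} (ha : a ≠ 0) :
    HasSum (fun n : ℕ => 2 * a / (a ^ 2 + ((n : ℝ) + 1) ^ 2)) (π * cothPi a - 1 / a) := by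
  have hx := I_mul_ofReal_mem_integerComplement ha
  have hcot : HasSum (cotTerm (I * a)) (π * cot (π * (I * a)) - 1 / (I * a)) :=
    (summable_cotTerm hx).hasSum_iff_tendsto_nat.mpr (tendsto_logDeriv_euler_cot_sub hx)
  have hterm (n : ℕ) :
      cotTerm (I * a) n = -I * ((2 * a / (a ^ 2 + ((n : ℝ) + 1) ^ 2) : ℝ) : ℂ) := by
    have hadd := integerComplement_add_ne_zero hx ((n : ℤ) + 1)
    have hsub := integerComplement_add_ne_zero hx (-((n : ℤ) + 1))
    have : (a : ℂ) ^ 2 + ((n : ℂ) + 1) ^ 2 ≠ 0 := by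
      exact_mod_cast (by positivity : a ^ 2 + ((n : ℝ) + 1) ^ 2 ≠ 0)
    push_cast at hadd hsub ⊢
    rw [← sub_eq_add_neg] at hsub
    unfold cotTerm
    field_simp
    linear_combination (2 * I * (a : ℂ) ^ 3) * I_sq
  have hval :
      π * cot (π * (I * a)) - 1 / (I * a) = -I * ((π * cothPi a - 1 / a : ℝ) : ℂ) := by
    have hE : Complex.exp (2 * π * I * (I * a)) = ((Real.exp (2 * π * a))⁻¹ : ℝ) := by
      rw [← Real.exp_neg, Complex.ofReal_exp]
      congr 1
      push_cast
      linear_combination (2 * π * (a : ℂ)) * I_sq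
    have hne : Real.exp (2 * π * a) ≠ 1 := by
      rw [Ne, Real.exp_eq_one_iff]
      exact mul_ne_zero (by positivity) ha
    have h₁ : (Real.exp (2 * π * a) : ℂ) - 1 ≠ 0 := sub_ne_zero.mpr (by exact_mod_cast hne)
    have h₀ : (Real.exp (2 * π * a) : ℂ) ≠ 0 := by exact_mod_cast (Real.exp_pos _).ne'
    rw [cot_pi_eq_exp_ratio, hE, cothPi]
    generalize Real.exp (2 * π * a) = E at *
    push_cast
    field_simp
    linear_combination (π * (1 + E) + (1 - E) / a) * I_sq
  rw [funext hterm, hval, hasSum_mul_left_iff (neg_ne_zero.mpr I_ne_zero)] at hcot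
  exact Complex.hasSum_ofReal.mp hcot

lemma one_div_pow_mul_add_eq {K : Type*} [Field K] {x y : K} (hx : x ≠ 0) (hy : y ≠ 0)
    (hxy : x + y ≠ 0) (M : ℕ) :
    1 / (x ^ M * (x + y)) =
      ∑ j ∈ Finset.range M, (-1) ^ j * (1 / x ^ (M - j) * (1 / y ^ (j + 1)))
        + (-1) ^ M * (1 / (y ^ M * (y + x))) := by
  induction M with
  | zero => simp [add_comm]
  | succ M ih =>
    have hstep : 1 / (x ^ (M + 1) * (x + y)) =
        1 / x ^ (M + 1) * (1 / y) - 1 / (x ^ M * (x + y)) * (1 / y) := by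
      field_simp
      ring
    have hterm : ∀ j ∈ Finset.range M,
        (-1) ^ (j + 1) * (1 / x ^ (M + 1 - (j + 1)) * (1 / y ^ (j + 1 + 1)))
          = -((-1) ^ j * (1 / x ^ (M - j) * (1 / y ^ (j + 1))) * (1 / y)) := by
      intro j _
      rw [Nat.add_sub_add_right]
      ring
    rw [hstep, ih, Finset.sum_range_succ', add_mul, Finset.sum_mul, Finset.sum_congr rfl hterm,
      Finset.sum_neg_distrib, Nat.sub_zero]
    generalize (∑ j ∈ Finset.range M, _ : K) = S
    field_simp
    ring

noncomputable def doubleSeriesTerm (M : ℕ) (p : ℕ × ℕ) : ℝ :=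
  1 / (((p.1 : ℝ) + 1) ^ (2 * M) * (((p.1 : ℝ) + 1) ^ 2 + ((p.2 : ℝ) + 1) ^ 2))

section doubleSeries

variable {M : ℕ}

lemma summable_doubleSeriesTerm (hM : M ≠ 0) : Summable (doubleSeriesTerm M) := by
  refine (hasSum_zetaNat_mul_zetaNat one_lt_two one_lt_two).summable.of_nonneg_of_le
    (fun p => by unfold doubleSeriesTerm; positivity) fun p => ?_
  have h₁ : ((p.1 : ℝ) + 1) ^ 2 ≤ ((p.1 : ℝ) + 1) ^ (2 * M) :=
    pow_le_pow_right₀ (by simp) (by omega)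
  have h₂ : ((p.2 : ℝ) + 1) ^ 2 ≤ ((p.1 : ℝ) + 1) ^ 2 + ((p.2 : ℝ) + 1) ^ 2 :=
    le_add_of_nonneg_left (by positivity)
  rw [doubleSeriesTerm, one_div_mul_one_div]
  gcongr

variable (M) in
lemma hasSum_doubleSeriesTerm_fiber (n : ℕ) :
    HasSum (fun k : ℕ => doubleSeriesTerm M (n, k))
      ((π * cothPi (n + 1) - 1 / ((n : ℝ) + 1)) / (2 * ((n : ℝ) + 1) ^ (2 * M + 1))) := by
  refine ((hasSum_two_mul_div_sq_add_sq (Nat.cast_add_one_ne_zero n)).div_const _).congr_fun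
    fun k => ?_
  rw [doubleSeriesTerm]
  field_simp
  ring

lemma hasSum_one_div_pow_mul_cothPi_of_doubleSeries (hM : M ≠ 0) :
    HasSum (fun n : ℕ => 1 / ((n : ℝ) + 1) ^ (2 * M + 1) * cothPi (n + 1))
      ((2 * ∑' p, doubleSeriesTerm M p + zetaNat (2 * M + 2)) / π) := by
  have hfib := (summable_doubleSeriesTerm hM).hasSum.prod_fiberwise
    (hasSum_doubleSeriesTerm_fiber M)
  refine (((hfib.mul_left 2).add (hasSum_zetaNat (by omega))).div_const π).congr_fun fun n => ?_
  rw [pow_succ]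
  field_simp
  ring

lemma tsum_doubleSeriesTerm_eq (hM : M ≠ 0) :
    ∑' p, doubleSeriesTerm M p =
      ∑ j ∈ Finset.range M, (-1) ^ j * (zetaNat (2 * (M - j)) * zetaNat (2 * (j + 1)))
        + (-1) ^ M * ∑' p, doubleSeriesTerm M p := by
  have hD := (summable_doubleSeriesTerm hM).hasSum
  have hswap :
      HasSum (fun p : ℕ × ℕ => doubleSeriesTerm M p.swap) (∑' p, doubleSeriesTerm M p) :=
    (Equiv.prodComm ℕ ℕ).hasSum_iff.mpr hD
  have hprod : ∀ j ∈ Finset.range M, HasSum (fun p : ℕ × ℕ => (-1) ^ j *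
      (1 / ((p.1 : ℝ) + 1) ^ (2 * (M - j)) * (1 / ((p.2 : ℝ) + 1) ^ (2 * (j + 1)))))
      ((-1) ^ j * (zetaNat (2 * (M - j)) * zetaNat (2 * (j + 1)))) := by
    intro j hj
    rw [Finset.mem_range] at hj
    exact (hasSum_zetaNat_mul_zetaNat (by omega) (by omega)).mul_left _
  refine hD.unique (((hasSum_sum hprod).add (hswap.mul_left _)).congr_fun fun p => ?_)
  simp only [doubleSeriesTerm, Prod.fst_swap, Prod.snd_swap, pow_mul]
  exact one_div_pow_mul_add_eq (by positivity) (by positivity) (by positivity) M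

end doubleSeries

theorem hasSum_one_div_pow_mul_cothPi {m : ℕ} (hm : Odd m) :
    HasSum (fun n : ℕ => 1 / ((n : ℝ) + 1) ^ (2 * m + 1) * cothPi (n + 1))
      ((zetaNat (2 * m + 2) + ∑ j ∈ Finset.range m,
        (-1) ^ j * (zetaNat (2 * (m - j)) * zetaNat (2 * (j + 1)))) / π) := by
  have hm₀ := hm.pos.ne'
  have hD := tsum_doubleSeriesTerm_eq hm₀
  rw [hm.neg_one_pow] at hD
  rw [show zetaNat (2 * m + 2) + _ = 2 * ∑' p, doubleSeriesTerm m p + zetaNat (2 * m + 2) by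
    linarith]
  exact hasSum_one_div_pow_mul_cothPi_of_doubleSeries hm₀

lemma bernoulli_div_factorial_eq_zetaNat {k : ℕ} (hk : k ≠ 0) :
    ((bernoulli (2 * k) : ℚ) : ℂ) / (2 * k).factorial
      = (-1) ^ (k + 1) * 2 * zetaNat (2 * k) / (2 * π) ^ (2 * k) := by
  have h₂ : (2 : ℂ) ^ (2 * k) = 2 * 2 ^ (2 * k - 1) := by
    rw [← pow_succ']
    congr 1
    omega
  have hsign : (-1 : ℂ) ^ (2 * k) = 1 := by rw [pow_mul, neg_one_sq, one_pow]
  rw [ofReal_zetaNat (by omega)]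
  push_cast
  rw [riemannZeta_two_mul_nat hk, mul_pow, h₂]
  field_simp
  linear_combination (-((bernoulli (2 * k) : ℚ) : ℂ) / (2 * k).factorial) * hsign

lemma bernoulli_mul_bernoulli_div_eq {k l : ℕ} (hk : k ≠ 0) (hl : l ≠ 0)
    (hkl : Even (k + l)) :
    ((bernoulli (2 * k) : ℚ) : ℂ) * ((bernoulli (2 * l) : ℚ) : ℂ)
        / ((2 * k).factorial * (2 * l).factorial)
      = 4 * zetaNat (2 * k) * zetaNat (2 * l) / (2 * π) ^ (2 * (k + l)) := by
  rw [mul_div_mul_comm, bernoulli_div_factorial_eq_zetaNat hk,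
    bernoulli_div_factorial_eq_zetaNat hl]
  have hsign : ((-1 : ℂ) ^ (k + 1)) * (-1) ^ (l + 1) = 1 := by
    rw [← pow_add, show k + 1 + (l + 1) = k + l + 2 by ring, pow_add, hkl.neg_one_pow]
    norm_num
  calc _ = ((-1 : ℂ) ^ (k + 1) * (-1) ^ (l + 1)) * (4 * zetaNat (2 * k) * zetaNat (2 * l)
        / ((2 * π) ^ (2 * k) * (2 * π) ^ (2 * l))) := by ring
    _ = _ := by rw [hsign, one_mul, ← pow_add, ← mul_add]

lemma sum_bernoulli_mul_bernoulli_eq {m : ℕ} (hm : Odd m) :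
    (π : ℂ) ^ (2 * m + 1) * 2 ^ (2 * m) * ∑ j ∈ Finset.range (m + 2),
      (-1) ^ (j + 1) * ((bernoulli (2 * j) : ℚ) : ℂ) *
        ((bernoulli (2 * m + 2 - 2 * j) : ℚ) : ℂ) /
        ((Nat.factorial (2 * j)) * (Nat.factorial (2 * m + 2 - 2 * j)))
      = ((zetaNat (2 * m + 2) + ∑ j ∈ Finset.range m,
          (-1) ^ j * (zetaNat (2 * (m - j)) * zetaNat (2 * (j + 1)))) / π : ℝ) := by
  have hm₁ : Even (m + 1) := hm.add_one
  have hF : ((2 * m + 2).factorial : ℂ) ≠ 0 := by exact_mod_cast (Nat.factorial_pos _).ne'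
  have hmid : ∀ j ∈ Finset.range m,
      (-1) ^ (j + 1 + 1) * ((bernoulli (2 * (j + 1)) : ℚ) : ℂ) *
        ((bernoulli (2 * m + 2 - 2 * (j + 1)) : ℚ) : ℂ) /
        ((Nat.factorial (2 * (j + 1))) * (Nat.factorial (2 * m + 2 - 2 * (j + 1))))
      = 4 / (2 * π) ^ (2 * m + 2) *
          ((-1) ^ j * (zetaNat (2 * (m - j)) * zetaNat (2 * (j + 1)))) := by
    intro j hj
    rw [Finset.mem_range] at hj
    rw [show 2 * m + 2 - 2 * (j + 1) = 2 * (m - j) by omega, mul_assoc, mul_div_assoc,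
      bernoulli_mul_bernoulli_div_eq (by omega) (by omega)
        (by rwa [show j + 1 + (m - j) = m + 1 by omega]),
      show 2 * (j + 1 + (m - j)) = 2 * m + 2 by omega]
    ring
  have hedge : ((bernoulli (2 * m + 2) : ℚ) : ℂ)
      = -2 * zetaNat (2 * m + 2) / (2 * π) ^ (2 * m + 2) * (2 * m + 2).factorial := by
    rw [← div_eq_iff hF,
      show 2 * m + 2 = 2 * (m + 1) by ring, bernoulli_div_factorial_eq_zetaNat (by omega),
      pow_succ, hm₁.neg_one_pow]
    ring
  push_cast
  rw [Finset.sum_range_succ, Finset.sum_range_succ', Finset.sum_congr rfl hmid, ← Finset.mul_sum]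
  simp only [show 2 * (m + 1) = 2 * m + 2 by ring, mul_zero, Nat.sub_zero, Nat.sub_self,
    bernoulli_zero, Nat.factorial_zero, zero_add, pow_one, pow_succ _ (m + 1), hm₁.neg_one_pow,
    Rat.cast_one, Nat.cast_one]
  rw [hedge]
  generalize (∑ j ∈ Finset.range m, _ : ℂ) = S
  field_simp
  ring

lemma tsum_zpow_div_exp_sub_one (m : ℕ) :
    ∑' n : ℕ, ((n : ℂ) + 1) ^ (-(2 * (m : ℤ)) - 1) /
        (Complex.exp (2 * π * ((n : ℂ) + 1)) - 1)
      = ((∑' n : ℕ, 1 / ((n : ℝ) + 1) ^ (2 * m + 1) /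
          (Real.exp (2 * π * ((n : ℝ) + 1)) - 1) : ℝ) : ℂ) := by
  rw [Complex.ofReal_tsum]
  refine tsum_congr fun n => ?_
  rw [show -(2 * (m : ℤ)) - 1 = -((2 * m + 1 : ℕ) : ℤ) by push_cast; ring, zpow_neg,
    zpow_natCast]
  push_cast
  ring

theorem lerch_formula_general (m : ℕ) (hodd : Odd m) :
    riemannZeta (2 * m + 1) +
      2 * ∑' n : ℕ, ((n : ℂ) + 1) ^ (-(2 * (m : ℤ)) - 1) /
        (Complex.exp (2 * π * ((n : ℂ) + 1)) - 1) =
    (π : ℂ) ^ (2 * m + 1) * 2 ^ (2 * m) * ∑ j ∈ Finset.range (m + 2),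
      (-1) ^ (j + 1) * ((bernoulli (2 * j) : ℚ) : ℂ) *
        ((bernoulli (2 * m + 2 - 2 * j) : ℚ) : ℂ) /
        ((Nat.factorial (2 * j)) * (Nat.factorial (2 * m + 2 - 2 * j))) := by
  have hm := hodd.pos
  have hseries := (((hasSum_one_div_pow_mul_cothPi hodd).sub
    (hasSum_zetaNat (k := 2 * m + 1) (by omega))).div_const 2).congr_fun
    (g := fun n : ℕ =>
      1 / ((n : ℝ) + 1) ^ (2 * m + 1) / (Real.exp (2 * π * ((n : ℝ) + 1)) - 1))
    fun n => by rw [cothPi]; ring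
  rw [tsum_zpow_div_exp_sub_one, hseries.tsum_eq, sum_bernoulli_mul_bernoulli_eq hodd,
    show (2 * m + 1 : ℂ) = (2 * m + 1 : ℕ) by push_cast; ring, ← ofReal_zetaNat (by omega)]
  push_cast
  ring

theorem lerch_formula (m : ℕ) (hm : 0 < m) (hodd : Odd m) :
    riemannZeta (2 * m + 1) +
      2 * ∑' n : ℕ, ((n : ℂ) + 1) ^ (-(2 * (m : ℤ)) - 1) /
        (Complex.exp (2 * π * ((n : ℂ) + 1)) - 1) =
    (π : ℂ) ^ (2 * m + 1) * 2 ^ (2 * m) * ∑ j ∈ Finset.range (m + 2),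
      (-1) ^ (j + 1) * ((bernoulli (2 * j) : ℚ) : ℂ) *
        ((bernoulli (2 * m + 2 - 2 * j) : ℚ) : ℂ) /
        ((Nat.factorial (2 * j)) * (Nat.factorial (2 * m + 2 - 2 * j))) :=
  lerch_formula_general m hodd
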